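/- arXiv:0808.3840 — 3 statements merged into one kernel-verified Lean document; each statement's English description precedes it below -/
import Mathlib

section
/- Let V be an F_2-vector space and let ε_1 : F_2[V] → V be the group homomorphism sending Σ α_v X^v to Σ α_v v. If ξ is a nonzero element of the augmentation ideal I[V] with ε_1(ξ) = 0, and d = |D(ξ)|, then d ≥ 4 and ξ can be written as a sum of at most d − 2 products (1 + X^u)(1 + X^v) (2-fold Pfister elements). If moreover 0 ∈ D(ξ), then at most d − 3 such terms suffice. -/
/-- The augmentation map ε₀ on the group algebra F₂[V]. -/
noncomputable def eps0 (V : Type*) [AddCommGroup V] [Module (ZMod 2) V] :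
    AddMonoidAlgebra (ZMod 2) V →ₐ[ZMod 2] ZMod 2 :=
  AddMonoidAlgebra.lift (ZMod 2) (ZMod 2) V 1

/-- The augmentation ideal I[V] ⊆ F₂[V]. -/
noncomputable def augIdeal (V : Type*) [AddCommGroup V] [Module (ZMod 2) V] :
    Ideal (AddMonoidAlgebra (ZMod 2) V) :=
  RingHom.ker (eps0 V).toRingHom

/-- The map ε₁ : F₂[V] → V, Σ αᵥ Xᵛ ↦ Σ αᵥ v. -/
noncomputable def eps1 (V : Type*) [AddCommGroup V] [Module (ZMod 2) V] :
    AddMonoidAlgebra (ZMod 2) V →+ V :=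
  (Finsupp.liftAddHom fun v => (smulAddHom (ZMod 2) V).flip v).comp
    (AddMonoidAlgebra.coeffAddEquiv (R := ZMod 2) (M := V)).toAddMonoidHom

/-- 1-fold Pfister elements 1 + Xᵛ. -/
def IsPfister1 {V : Type*} [AddCommGroup V] [Module (ZMod 2) V]
    (x : AddMonoidAlgebra (ZMod 2) V) : Prop :=
  ∃ v : V, x = 1 + AddMonoidAlgebra.single v 1

/-- 2-fold Pfister elements (1 + Xᵘ)(1 + Xᵛ). -/
def IsPfister2 {V : Type*} [AddCommGroup V] [Module (ZMod 2) V]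
    (x : AddMonoidAlgebra (ZMod 2) V) : Prop :=
  ∃ u v : V, x = (1 + AddMonoidAlgebra.single u 1) * (1 + AddMonoidAlgebra.single v 1)

/-- m-fold Pfister elements (1 + X^{v₁})⋯(1 + X^{v_m}). -/
def IsPfister {V : Type*} [AddCommGroup V] [Module (ZMod 2) V] (m : ℕ)
    (x : AddMonoidAlgebra (ZMod 2) V) : Prop :=
  ∃ v : Fin m → V, x = ∏ i, (1 + AddMonoidAlgebra.single (v i) 1)

/-- The m-Pfister number: least number of m-fold Pfister elements summing to x. -/
noncomputable def PfNum {V : Type*} [AddCommGroup V] [Module (ZMod 2) V] (m : ℕ)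
    (x : AddMonoidAlgebra (ZMod 2) V) : ℕ :=
  sInf {r | ∃ f : Fin r → AddMonoidAlgebra (ZMod 2) V,
    (∀ i, IsPfister m (f i)) ∧ x = ∑ i, f i}

/-! Over F₂ an element is the sum of `X^v` over its support `D`, and since `|D|` is even for
`ξ ∈ I[V]` this is also `Σ_{v ∈ D} (1 + X^v)`. In characteristic 2,
`(1 + X^a) + (1 + X^b) = (1 + X^a)(1 + X^b) + (1 + X^(a+b))`, so two 1-fold Pfister elements can be
traded for one 2-fold Pfister element while merging `a` and `b` into `a + b`. Since the vectors of
`D` sum to `ε₁(ξ) = 0`, after `d - 2` merges what is left is `1 + X^0 = 0` or `2 (1 + X^a) = 0`.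
If `0 ∈ D` its term `1 + X^0` already vanishes, saving one merge. Finally `d ≥ 4` because `d` is
even and nonzero, and two distinct vectors never sum to `0`. -/

open AddMonoidAlgebra

theorem CharTwo.one_add_add_one_add {A : Type*} [CommRing A] [CharP A 2] (x y : A) :
    (1 + x) + (1 + y) = (1 + x) * (1 + y) + (1 + x * y) := by
  linear_combination (-x * y) * CharTwo.two_eq_zero (R := A)

namespace GroupAlgebraF2

theorem sum_support_single_one {M : Type*} (ξ : AddMonoidAlgebra (ZMod 2) M) :
    ∑ m ∈ ξ.coeff.support, single m (1 : ZMod 2) = ξ := by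
  conv_rhs => rw [← sum_coeff_single ξ]
  refine Finset.sum_congr rfl fun m hm => ?_
  rw [Fin.eq_one_of_ne_zero (ξ.coeff m) (Finsupp.mem_support_iff.mp hm)]
  rfl

variable {V : Type*} [AddCommGroup V]

instance : CharP (AddMonoidAlgebra (ZMod 2) V) 2 := charP_of_injective_algebraMap' (ZMod 2) 2

noncomputable def pfister1 (v : V) : AddMonoidAlgebra (ZMod 2) V := 1 + single v 1

theorem pfister1_zero : pfister1 (0 : V) = 0 := by
  rw [pfister1, ← one_def, CharTwo.add_self_eq_zero]

theorem pfister1_add_pfister1 (a b : V) :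
    pfister1 a + pfister1 b = pfister1 a * pfister1 b + pfister1 (a + b) := by
  rw [pfister1, pfister1, pfister1, ← one_mul (1 : ZMod 2), ← single_mul_single, one_mul]
  exact CharTwo.one_add_add_one_add _ _

variable [Module (ZMod 2) V]

def IsSumPfister2 (r : ℕ) (x : AddMonoidAlgebra (ZMod 2) V) : Prop :=
  ∃ f : Fin r → AddMonoidAlgebra (ZMod 2) V, (∀ i, IsPfister2 (f i)) ∧ x = ∑ i, f i

theorem IsSumPfister2.zero : IsSumPfister2 0 (0 : AddMonoidAlgebra (ZMod 2) V) :=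
  ⟨Fin.elim0, fun i => i.elim0, by simp⟩

theorem IsSumPfister2.pfister2_add {p x : AddMonoidAlgebra (ZMod 2) V} {r : ℕ}
    (hp : IsPfister2 p) (hx : IsSumPfister2 r x) : IsSumPfister2 (r + 1) (p + x) := by
  obtain ⟨f, hf, rfl⟩ := hx
  exact ⟨Fin.cons p f, Fin.cases hp hf, by rw [Fin.sum_cons]⟩

theorem isSumPfister2_sum_map_pfister1 :
    ∀ l : List V, l.sum = 0 → IsSumPfister2 (l.length - 2) (l.map pfister1).sum
  | [], _ => by simpa using IsSumPfister2.zero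
  | [a], h => by
    rw [List.sum_singleton] at h
    simpa [h, pfister1_zero] using IsSumPfister2.zero
  | [a, b], h => by
    obtain rfl : b = a := by
      rw [List.sum_pair, add_eq_zero_iff_eq_neg, ZModModule.neg_eq_self] at h
      exact h.symm
    simpa [CharTwo.add_self_eq_zero] using IsSumPfister2.zero
  | a :: b :: c :: t, h => by
    have hmerged :=
      isSumPfister2_sum_map_pfister1 ((a + b) :: c :: t) (by simpa [add_assoc] using h)
    convert IsSumPfister2.pfister2_add ⟨a, b, rfl⟩ hmerged using 1
    · simp only [List.length_cons]
      omega
    · simp only [List.map_cons, List.sum_cons]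
      rw [← add_assoc, pfister1_add_pfister1, add_assoc]
      rfl
termination_by l => l.length

theorem isSumPfister2_sum_pfister1 {s : Finset V} (hs : ∑ v ∈ s, v = 0) :
    IsSumPfister2 (s.card - 2) (∑ v ∈ s, pfister1 v) := by
  have := isSumPfister2_sum_map_pfister1 s.toList (by rwa [Finset.sum_toList])
  rwa [Finset.length_toList, Finset.sum_map_toList] at this

theorem eps0_eq_card (ξ : AddMonoidAlgebra (ZMod 2) V) : eps0 V ξ = ξ.coeff.support.card := by
  conv_lhs => rw [← sum_support_single_one ξ]
  simp [eps0, lift_single]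

theorem eps1_eq_sum (ξ : AddMonoidAlgebra (ZMod 2) V) :
    eps1 V ξ = ∑ v ∈ ξ.coeff.support, v := by
  conv_lhs => rw [← sum_support_single_one ξ]
  simp [eps1]

theorem two_dvd_card_support {ξ : AddMonoidAlgebra (ZMod 2) V} (hξ : ξ ∈ augIdeal V) :
    2 ∣ ξ.coeff.support.card := by
  rw [← ZMod.natCast_eq_zero_iff, ← eps0_eq_card]
  exact hξ

theorem sum_pfister1_support {ξ : AddMonoidAlgebra (ZMod 2) V} (hξ : ξ ∈ augIdeal V) :
    ∑ v ∈ ξ.coeff.support, pfister1 v = ξ := by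
  have hcard := (CharP.cast_eq_zero_iff (AddMonoidAlgebra (ZMod 2) V) 2 _).mpr
    (two_dvd_card_support hξ)
  simp only [pfister1, Finset.sum_add_distrib, Finset.sum_const, nsmul_one, hcard, zero_add,
    sum_support_single_one]

theorem four_le_card_support {ξ : AddMonoidAlgebra (ZMod 2) V} (hξ : ξ ≠ 0)
    (hmem : ξ ∈ augIdeal V) (he1 : eps1 V ξ = 0) : 4 ≤ ξ.coeff.support.card := by
  have heven := two_dvd_card_support hmem
  have hne0 : ξ.coeff.support.card ≠ 0 := by simpa using hξ
  have hne2 : ξ.coeff.support.card ≠ 2 := by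
    intro h2
    classical
    obtain ⟨a, b, hab, hD⟩ := Finset.card_eq_two.mp h2
    rw [eps1_eq_sum, hD, Finset.sum_pair hab, ← ZModModule.sub_eq_add, sub_eq_zero] at he1
    exact hab he1
  omega

end GroupAlgebraF2

open GroupAlgebraF2

/-- A nonzero ξ ∈ I[V] with ε₁(ξ) = 0 and support of cardinality d satisfies d ≥ 4,
ξ is a sum of at most d − 2 two-fold Pfister elements; at most d − 3 if 0 ∈ D(ξ). -/
theorem pfister2_decomposition (V : Type*) [AddCommGroup V] [Module (ZMod 2) V]
    (ξ : AddMonoidAlgebra (ZMod 2) V) (hξ : ξ ≠ 0) (hmem : ξ ∈ augIdeal V)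
    (he1 : eps1 V ξ = 0) :
    4 ≤ ξ.coeff.support.card ∧
    (∃ r ≤ ξ.coeff.support.card - 2, ∃ f : Fin r → AddMonoidAlgebra (ZMod 2) V,
      (∀ i, IsPfister2 (f i)) ∧ ξ = ∑ i, f i) ∧
    ((0 : V) ∈ ξ.coeff.support →
      ∃ r ≤ ξ.coeff.support.card - 3, ∃ f : Fin r → AddMonoidAlgebra (ZMod 2) V,
        (∀ i, IsPfister2 (f i)) ∧ ξ = ∑ i, f i) := by
  have hsum : ∑ v ∈ ξ.coeff.support, v = 0 := by rwa [← eps1_eq_sum]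
  refine ⟨four_le_card_support hξ hmem he1, ⟨_, le_rfl, ?_⟩, fun h0 => ⟨_, le_rfl, ?_⟩⟩
  · have := isSumPfister2_sum_pfister1 hsum
    rwa [sum_pfister1_support hmem] at this
  · classical
    have hsum' : ∑ v ∈ ξ.coeff.support.erase 0, v = 0 :=
      (Finset.sum_erase (f := id) _ rfl).trans hsum
    have := isSumPfister2_sum_pfister1 hsum'
    rwa [Finset.sum_erase _ pfister1_zero, sum_pfister1_support hmem,
      Finset.card_erase_of_mem h0, Nat.sub_sub] at this
end

section
/- Let V be an F_2-vector space and let ξ ∈ I²[V] be nonzero. Then Pf_2(ξ) ≤ |D(ξ)| − 2, and if 0 ∈ D(ξ) then Pf_2(ξ) ≤ |D(ξ)| − 3. -/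
/-!
Adding the 2-fold Pfister element `(1 + Xᵘ)(1 + Xᵛ) = 1 + Xᵘ + Xᵛ + X^(u+v)` to `ξ` toggles the
points `0, u, v, u + v` of its support. If `0 ∈ D(ξ)`, choosing `u ≠ v` in `D(ξ) \ {0}` expels `0`
and shrinks the support by at least two; if `0 ∉ D(ξ)`, choosing `u ≠ v` in `D(ξ)` brings `0` back
without enlarging the support. Alternating the two moves and inducting on `|D(ξ)|` gives at most
`|D(ξ)| - 3` summands when `0 ∈ D(ξ)`, and one extra move gives `|D(ξ)| - 2` in general.
The count works because a nonzero `ξ ∈ I²[V]` has `|D(ξ)| ≥ 4`: `ε₀` and `ε₁` vanish on `I²[V]`,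
so `|D(ξ)|` is even, and `D(ξ) = {a, b}` would force `a + b = 0`.
-/

section

open Finset AddMonoidAlgebra

lemma Finsupp.support_add_eq_symmDiff_of_zmod_two {α : Type*} [DecidableEq α]
    (f g : α →₀ ZMod 2) : (f + g).support = symmDiff f.support g.support := by
  ext a
  simp only [mem_symmDiff, Finsupp.mem_support_iff, Finsupp.add_apply]
  generalize f a = x
  generalize g a = y
  revert x y
  decide

lemma Finset.card_symmDiff_add_two_mul_card_inter {α : Type*} [DecidableEq α]
    (s t : Finset α) : #(symmDiff s t) + 2 * #(s ∩ t) = #s + #t := by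
  rw [symmDiff_eq_sup_sdiff_inf, sup_eq_union, inf_eq_inter,
    card_sdiff_of_subset inter_subset_union, ← card_union_add_card_inter]
  have := card_le_card (inter_subset_union (s := s) (t := t))
  omega

lemma Finsupp.apply_eq_one_of_mem_support_zmod_two {α : Type*} {f : α →₀ ZMod 2} {a : α}
    (h : a ∈ f.support) : f a = 1 := by
  have : ∀ c : ZMod 2, c ≠ 0 → c = 1 := by decide
  exact this _ (Finsupp.mem_support_iff.mp h)

lemma Finsupp.card_support_add_add_two_mul_le_of_zmod_two {α : Type*} [DecidableEq α]
    (f g : α →₀ ZMod 2) {s : Finset α} (hs : s ⊆ f.support ∩ g.support) :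
    #(f + g).support + 2 * #s ≤ #f.support + #g.support := by
  rw [support_add_eq_symmDiff_of_zmod_two, ← card_symmDiff_add_two_mul_card_inter]
  have := card_le_card hs
  omega

lemma AddMonoidAlgebra.ne_zero_of_mem_coeff_support {R M : Type*} [Semiring R]
    {x : AddMonoidAlgebra R M} {m : M} (h : m ∈ x.coeff.support) : x ≠ 0 := by
  rintro rfl
  simp at h

variable {V : Type*} [AddCommGroup V]

noncomputable def pfister2 (u v : V) : AddMonoidAlgebra (ZMod 2) V :=
  (1 + single u 1) * (1 + single v 1)

lemma pfister2_eq (u v : V) :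
    pfister2 u v = single 0 1 + single u 1 + single v 1 + single (u + v) 1 := by
  rw [pfister2, mul_add, add_mul, add_mul, mul_one, one_mul, single_mul_single, mul_one, one_def]
  abel

lemma card_support_pfister2_le [DecidableEq V] (u v : V) :
    #(pfister2 u v).coeff.support ≤ 4 := by
  have : (pfister2 u v).coeff.support ⊆ {0, u, v, u + v} := by
    intro w hw
    contrapose! hw
    simp only [mem_insert, mem_singleton, not_or] at hw
    obtain ⟨h0, hu, hv, huv⟩ := hw
    simp [pfister2_eq, Ne.symm h0, Ne.symm hu, Ne.symm hv, Ne.symm huv]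
  exact (card_le_card this).trans card_le_four

variable [Module (ZMod 2) V]

lemma mem_augIdeal_iff {x : AddMonoidAlgebra (ZMod 2) V} : x ∈ augIdeal V ↔ eps0 V x = 0 :=
  Iff.rfl

lemma eps0_single (v : V) (c : ZMod 2) : eps0 V (single v c) = c := by
  simp [eps0]

lemma eps0_eq_card_support (x : AddMonoidAlgebra (ZMod 2) V) :
    eps0 V x = (#x.coeff.support : ZMod 2) := by
  rw [eps0, lift_apply, Finsupp.sum, card_eq_sum_ones, Nat.cast_sum]
  refine sum_congr rfl fun w hw => ?_
  simp [Finsupp.apply_eq_one_of_mem_support_zmod_two hw]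

lemma eps1_single (v : V) (c : ZMod 2) : eps1 V (single v c) = c • v :=
  Finsupp.sum_single_index (zero_smul _ v)

lemma eps1_mul (a b : AddMonoidAlgebra (ZMod 2) V) :
    eps1 V (a * b) = eps0 V a • eps1 V b + eps0 V b • eps1 V a := by
  induction a using AddMonoidAlgebra.induction_linear with
  | zero => simp
  | add f g hf hg => simp only [add_mul, map_add, hf, hg, add_smul, smul_add]; abel
  | single u α =>
    induction b using AddMonoidAlgebra.induction_linear with
    | zero => simp
    | add f g hf hg => simp only [mul_add, map_add, hf, hg, add_smul, smul_add]; abel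
    | single v β =>
      simp only [single_mul_single, eps1_single, eps0_single, smul_add, smul_smul, mul_comm β α]
      abel

lemma eps0_eq_zero_of_mem_augIdeal_sq {ξ : AddMonoidAlgebra (ZMod 2) V}
    (h : ξ ∈ augIdeal V ^ 2) : eps0 V ξ = 0 :=
  Ideal.pow_le_self two_ne_zero h

lemma eps1_eq_zero_of_mem_augIdeal_sq {ξ : AddMonoidAlgebra (ZMod 2) V}
    (h : ξ ∈ augIdeal V ^ 2) : eps1 V ξ = 0 := by
  rw [sq] at h
  refine Submodule.mul_induction_on h (fun a ha b hb => ?_) (fun x y hx hy => ?_)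
  · rw [eps1_mul, mem_augIdeal_iff.mp ha, mem_augIdeal_iff.mp hb, zero_smul, zero_smul, add_zero]
  · rw [map_add, hx, hy, add_zero]

lemma four_le_card_support_of_mem_augIdeal_sq {ξ : AddMonoidAlgebra (ZMod 2) V} (hξ : ξ ≠ 0)
    (hmem : ξ ∈ augIdeal V ^ 2) : 4 ≤ #ξ.coeff.support := by
  classical
  have h_even : 2 ∣ #ξ.coeff.support := by
    rw [← ZMod.natCast_eq_zero_iff, ← eps0_eq_card_support]
    exact eps0_eq_zero_of_mem_augIdeal_sq hmem
  have h_ne_zero : #ξ.coeff.support ≠ 0 := by simpa using hξ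
  have h_ne_two : #ξ.coeff.support ≠ 2 := by
    intro h2
    obtain ⟨a, b, hab, hs⟩ := card_eq_two.mp h2
    have ha : a ∈ ξ.coeff.support := hs ▸ mem_insert_self a {b}
    have hb : b ∈ ξ.coeff.support := hs ▸ mem_insert_of_mem (mem_singleton_self b)
    have : eps1 V ξ = a + b := by
      change ξ.coeff.sum (fun w c => c • w) = a + b
      rw [Finsupp.sum, hs, sum_pair hab, Finsupp.apply_eq_one_of_mem_support_zmod_two ha,
        Finsupp.apply_eq_one_of_mem_support_zmod_two hb, one_smul, one_smul]
    rw [eps1_eq_zero_of_mem_augIdeal_sq hmem, eq_comm, ← ZModModule.sub_eq_add, sub_eq_zero] at this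
    exact hab this
  omega

lemma pfister2_mem_augIdeal_sq (u v : V) : pfister2 u v ∈ augIdeal V ^ 2 := by
  have one_add_single_mem (w : V) : 1 + single w 1 ∈ augIdeal V := by
    rw [mem_augIdeal_iff, map_add, map_one, eps0_single]
    decide
  exact sq (augIdeal V) ▸ Ideal.mul_mem_mul (one_add_single_mem u) (one_add_single_mem v)

lemma subset_support_pfister2 [DecidableEq V] {u v : V} (hu : u ≠ 0) (hv : v ≠ 0) (huv : u ≠ v) :
    {0, u, v} ⊆ (pfister2 u v).coeff.support := by
  have huv' : u + v ≠ 0 := by rwa [Ne, ← ZModModule.sub_eq_add, sub_eq_zero]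
  intro w hw
  simp only [mem_insert, mem_singleton] at hw
  simp only [pfister2_eq, Finsupp.mem_support_iff, coeff_add, coeff_single, Finsupp.add_apply,
    Finsupp.single_apply]
  rcases hw with rfl | rfl | rfl <;> simp [hu, hv, huv, huv.symm, huv', hu.symm, hv.symm]

lemma exists_eq_add_pfister2_of_zero_mem {ξ : AddMonoidAlgebra (ZMod 2) V}
    (hmem : ξ ∈ augIdeal V ^ 2) (h0 : (0 : V) ∈ ξ.coeff.support) :
    ∃ ξ' u v, ξ = ξ' + pfister2 u v ∧ ξ' ∈ augIdeal V ^ 2 ∧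
      (0 : V) ∉ ξ'.coeff.support ∧ #ξ'.coeff.support + 2 ≤ #ξ.coeff.support := by
  classical
  have h4 := four_le_card_support_of_mem_augIdeal_sq (ne_zero_of_mem_coeff_support h0) hmem
  obtain ⟨u, hu, v, hv, huv⟩ :=
    one_lt_card.mp (show 1 < #(ξ.coeff.support.erase 0) by rw [card_erase_of_mem h0]; omega)
  rw [mem_erase] at hu hv
  have hP := subset_support_pfister2 hu.1 hv.1 huv
  refine ⟨ξ + pfister2 u v, u, v, by rw [add_assoc, ZModModule.add_self, add_zero],
    add_mem hmem (pfister2_mem_augIdeal_sq u v), ?_, ?_⟩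
  · rw [coeff_add, Finsupp.support_add_eq_symmDiff_of_zmod_two, mem_symmDiff]
    have : (0 : V) ∈ (pfister2 u v).coeff.support := hP (mem_insert_self _ _)
    tauto
  · have hs : {0, u, v} ⊆ ξ.coeff.support ∩ (pfister2 u v).coeff.support :=
      subset_inter (by simp [insert_subset_iff, h0, hu.2, hv.2]) hP
    have := Finsupp.card_support_add_add_two_mul_le_of_zmod_two _ _ hs
    rw [← coeff_add, card_eq_three.mpr ⟨0, u, v, hu.1.symm, hv.1.symm, huv, rfl⟩] at this
    have := card_support_pfister2_le u v
    omega

lemma exists_eq_add_pfister2_of_zero_notMem {ξ : AddMonoidAlgebra (ZMod 2) V} (hξ : ξ ≠ 0)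
    (hmem : ξ ∈ augIdeal V ^ 2) (h0 : (0 : V) ∉ ξ.coeff.support) :
    ∃ ξ' u v, ξ = ξ' + pfister2 u v ∧ ξ' ∈ augIdeal V ^ 2 ∧
      (0 : V) ∈ ξ'.coeff.support ∧ #ξ'.coeff.support ≤ #ξ.coeff.support := by
  classical
  have h4 := four_le_card_support_of_mem_augIdeal_sq hξ hmem
  obtain ⟨u, hu, v, hv, huv⟩ := one_lt_card.mp (show 1 < #ξ.coeff.support by omega)
  have hu0 : u ≠ 0 := by rintro rfl; exact h0 hu
  have hv0 : v ≠ 0 := by rintro rfl; exact h0 hv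
  have hP := subset_support_pfister2 hu0 hv0 huv
  refine ⟨ξ + pfister2 u v, u, v, by rw [add_assoc, ZModModule.add_self, add_zero],
    add_mem hmem (pfister2_mem_augIdeal_sq u v), ?_, ?_⟩
  · rw [coeff_add, Finsupp.support_add_eq_symmDiff_of_zmod_two, mem_symmDiff]
    exact .inr ⟨hP (mem_insert_self _ _), h0⟩
  · have hs : {u, v} ⊆ ξ.coeff.support ∩ (pfister2 u v).coeff.support :=
      subset_inter (by simp [insert_subset_iff, hu, hv]) ((subset_insert _ _).trans hP)
    have := Finsupp.card_support_add_add_two_mul_le_of_zmod_two _ _ hs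
    rw [← coeff_add, card_pair huv] at this
    have := card_support_pfister2_le u v
    omega

def IsSumOfPfister2 (r : ℕ) (ξ : AddMonoidAlgebra (ZMod 2) V) : Prop :=
  ∃ f : Fin r → AddMonoidAlgebra (ZMod 2) V, (∀ i, IsPfister2 (f i)) ∧ ξ = ∑ i, f i

lemma isSumOfPfister2_zero : IsSumOfPfister2 0 (0 : AddMonoidAlgebra (ZMod 2) V) :=
  ⟨Fin.elim0, fun i => i.elim0, by simp⟩

lemma IsSumOfPfister2.add_pfister2 {r : ℕ} {ξ : AddMonoidAlgebra (ZMod 2) V}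
    (h : IsSumOfPfister2 r ξ) (u v : V) : IsSumOfPfister2 (r + 1) (ξ + pfister2 u v) := by
  obtain ⟨f, hf, rfl⟩ := h
  refine ⟨Fin.snoc f (pfister2 u v), fun i => ?_, by rw [Fin.sum_snoc]⟩
  refine Fin.lastCases ?_ (fun j => ?_) i
  · simpa using ⟨u, v, rfl⟩
  · simpa using hf j

theorem exists_isSumOfPfister2_le_card_support_sub_three {ξ : AddMonoidAlgebra (ZMod 2) V}
    (hmem : ξ ∈ augIdeal V ^ 2) (h0 : (0 : V) ∈ ξ.coeff.support) :
    ∃ r ≤ #ξ.coeff.support - 3, IsSumOfPfister2 r ξ := by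
  obtain ⟨ξ₁, u, v, rfl, hmem₁, h0₁, hcard₁⟩ := exists_eq_add_pfister2_of_zero_mem hmem h0
  by_cases hξ₁ : ξ₁ = 0
  · have := four_le_card_support_of_mem_augIdeal_sq (ne_zero_of_mem_coeff_support h0) hmem
    refine ⟨1, by omega, ?_⟩
    rw [hξ₁]
    exact isSumOfPfister2_zero.add_pfister2 u v
  obtain ⟨ξ₂, u', v', rfl, hmem₂, h0₂, hcard₂⟩ :=
    exists_eq_add_pfister2_of_zero_notMem hξ₁ hmem₁ h0₁
  obtain ⟨r, hr, hsum⟩ := exists_isSumOfPfister2_le_card_support_sub_three hmem₂ h0₂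
  have := four_le_card_support_of_mem_augIdeal_sq hξ₁ hmem₁
  exact ⟨r + 2, by omega, (hsum.add_pfister2 u' v').add_pfister2 u v⟩
termination_by #ξ.coeff.support
decreasing_by omega

theorem exists_isSumOfPfister2_le_card_support_sub_two {ξ : AddMonoidAlgebra (ZMod 2) V}
    (hξ : ξ ≠ 0) (hmem : ξ ∈ augIdeal V ^ 2) :
    ∃ r ≤ #ξ.coeff.support - 2, IsSumOfPfister2 r ξ := by
  by_cases h0 : (0 : V) ∈ ξ.coeff.support
  · obtain ⟨r, hr, hsum⟩ := exists_isSumOfPfister2_le_card_support_sub_three hmem h0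
    exact ⟨r, by omega, hsum⟩
  obtain ⟨ξ₁, u, v, rfl, hmem₁, h0₁, hcard₁⟩ := exists_eq_add_pfister2_of_zero_notMem hξ hmem h0
  obtain ⟨r, hr, hsum⟩ := exists_isSumOfPfister2_le_card_support_sub_three hmem₁ h0₁
  have := four_le_card_support_of_mem_augIdeal_sq hξ hmem
  exact ⟨r + 1, by omega, hsum.add_pfister2 u v⟩

end

/-- For nonzero ξ ∈ I²[V]: Pf₂(ξ) ≤ |D(ξ)| − 2, and Pf₂(ξ) ≤ |D(ξ)| − 3 if 0 ∈ D(ξ);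
i.e. ξ admits a decomposition into at most that many 2-fold Pfister elements. -/
theorem pfNum_two_le (V : Type*) [AddCommGroup V] [Module (ZMod 2) V]
    (ξ : AddMonoidAlgebra (ZMod 2) V) (hξ : ξ ≠ 0) (hmem : ξ ∈ (augIdeal V) ^ 2) :
    (∃ r ≤ ξ.coeff.support.card - 2, ∃ f : Fin r → AddMonoidAlgebra (ZMod 2) V,
      (∀ i, IsPfister2 (f i)) ∧ ξ = ∑ i, f i) ∧
    ((0 : V) ∈ ξ.coeff.support →
      ∃ r ≤ ξ.coeff.support.card - 3, ∃ f : Fin r → AddMonoidAlgebra (ZMod 2) V,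
        (∀ i, IsPfister2 (f i)) ∧ ξ = ∑ i, f i) :=
  ⟨exists_isSumOfPfister2_le_card_support_sub_two hξ hmem,
    exists_isSumOfPfister2_le_card_support_sub_three hmem⟩
end

section
/- Let k be a field of characteristic ≠ 2 containing a square root of −1, and let q be a quadratic form of dimension n over k whose Witt class lies in I²(k). Then the Witt class of q can be written as a sum of at most n − 2 two-fold Pfister forms ⟨1, a⟩⊗⟨1, b⟩; if moreover q represents 1, then at most n − 3 such forms suffice. -/
/-- The image of the one-dimensional form `⟨a⟩` in the integral group ring `ℤ[kˣ]`. -/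
noncomputable def genElt (k : Type*) [Field k] (a : kˣ) : MonoidAlgebra ℤ kˣ :=
  MonoidAlgebra.of ℤ kˣ a

/-- The ideal of Witt relations in `ℤ[kˣ]`: the square-class relations `⟨u²⟩ = ⟨1⟩`,
the hyperbolic relation `⟨1⟩ + ⟨-1⟩ = 0`, and the chain relations
`⟨a⟩ + ⟨b⟩ = ⟨c⟩ + ⟨abc⟩` whenever `a + b = c ≠ 0` in `k`.  By Witt's presentation
theorem, the quotient of `ℤ[kˣ]` by this ideal is the Witt ring `W(k)`. -/
noncomputable def wittRel (k : Type*) [Field k] : Ideal (MonoidAlgebra ℤ kˣ) :=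
  Ideal.span (insert (genElt k 1 + genElt k (-1))
    ({x | ∃ u : kˣ, x = genElt k (u ^ 2) - genElt k 1} ∪
     {x | ∃ a b c : kˣ, (a : k) + (b : k) = (c : k) ∧
        x = genElt k a + genElt k b - genElt k c - genElt k (a * b * c)}))

/-- The Witt ring `W(k)`, via Witt's presentation. -/
abbrev WittRing (k : Type*) [Field k] := MonoidAlgebra ℤ kˣ ⧸ wittRel k

/-- The Witt class of the one-dimensional form `⟨a⟩`. -/
noncomputable def wcls (k : Type*) [Field k] (a : kˣ) : WittRing k :=
  Ideal.Quotient.mk (wittRel k) (genElt k a)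

/-- The Witt class of the diagonal quadratic form `⟨q 0, …, q (n-1)⟩`. -/
noncomputable def wclassOf (k : Type*) [Field k] {n : ℕ} (q : Fin n → kˣ) : WittRing k :=
  ∑ i, wcls k (q i)

/-- The fundamental ideal `I(k)`, generated by the classes of even-dimensional forms. -/
noncomputable def fundIdeal (k : Type*) [Field k] : Ideal (WittRing k) :=
  Ideal.span {x | ∃ a b : kˣ, x = wcls k a + wcls k b}

/-- The diagonal form `⟨q 0, …, q (n-1)⟩` represents `1`. -/
def RepresentsOne (k : Type*) [Field k] {n : ℕ} (q : Fin n → kˣ) : Prop :=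
  ∃ c : Fin n → k, ∑ i, (q i : k) * c i ^ 2 = 1

/-- The diagonal form `⟨q 0, …, q (n-1)⟩` is anisotropic. -/
def Anisotropic (k : Type*) [Field k] {n : ℕ} (q : Fin n → kˣ) : Prop :=
  ∀ c : Fin n → k, ∑ i, (q i : k) * c i ^ 2 = 0 → c = 0

/-- Witt classes of 1-fold Pfister forms `⟨1, a⟩`. -/
def IsPfister1W (k : Type*) [Field k] (x : WittRing k) : Prop :=
  ∃ a : kˣ, x = wcls k 1 + wcls k a

/-- Witt classes of 2-fold Pfister forms `⟨⟨a, b⟩⟩ = ⟨1,a⟩ ⊗ ⟨1,b⟩`. -/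
def IsPfister2W (k : Type*) [Field k] (x : WittRing k) : Prop :=
  ∃ a b : kˣ, x = (wcls k 1 + wcls k a) * (wcls k 1 + wcls k b)

/-- `x` is a sum of `r` Witt classes of 1-fold Pfister forms. -/
def Pf1In (k : Type*) [Field k] (x : WittRing k) (r : ℕ) : Prop :=
  ∃ f : Fin r → WittRing k, (∀ i, IsPfister1W k (f i)) ∧ x = ∑ i, f i

/-- `x` is a sum of `r` Witt classes of 2-fold Pfister forms. -/
def Pf2In (k : Type*) [Field k] (x : WittRing k) (r : ℕ) : Prop :=
  ∃ f : Fin r → WittRing k, (∀ i, IsPfister2W k (f i)) ∧ x = ∑ i, f i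

/-- The 1-Pfister number of a Witt class: the least number of 1-fold Pfister forms
whose sum is the given class. -/
noncomputable def Pf1Num (k : Type*) [Field k] (x : WittRing k) : ℕ :=
  sInf {r | Pf1In k x r}

/-- The 2-Pfister number of a Witt class: the least number of 2-fold Pfister forms
whose sum is the given class. -/
noncomputable def Pf2Num (k : Type*) [Field k] (x : WittRing k) : ℕ :=
  sInf {r | Pf2In k x r}

/-- `k` contains a square root of `-1`. -/
def HasSqrtNegOne (k : Type*) [Field k] : Prop := ∃ i : k, i * i = -1

/-!
Since `-1` is a square, `W(k)` has characteristic 2 and `⟨a⟩ + ⟨b⟩ = ⟨⟨a, b⟩⟩ + ⟨1, ab⟩`.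
Peeling off one 2-fold Pfister form per entry gives
`⟨a₀, …, a_m⟩ = (m two-fold Pfister forms) + m·⟨1⟩ + ⟨a₀ ⋯ a_m⟩`; so if `p` has dimension `N`
and square discriminant, the last entry cancels the discriminant of the others and
`p + N·⟨1⟩` is a sum of `N - 2` two-fold Pfister forms.

The ring homomorphism `W(k) → ℤ/2 ⊕ ε·(kˣ/kˣ²)`, `⟨a⟩ ↦ 1 + ε[a]`, sends `I(k)` into the
square-zero ideal and hence kills `I²(k)`: a form in `I²(k)` has even dimension and square
discriminant, which gives the bound `n - 2`. If `q` represents `1`, then `q = ⟨1⟩ + q'` in `W(k)`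
with `q'` of odd dimension `n - 1` and the same discriminant, so `q = q' + (n - 1)·⟨1⟩` is a sum
of `n - 3` two-fold Pfister forms.
-/

section WittRing

variable {k : Type*} [Field k]

lemma wcls_one : wcls k 1 = 1 := by
  unfold wcls genElt; rw [map_one, map_one]

lemma wcls_mul (a b : kˣ) : wcls k (a * b) = wcls k a * wcls k b := by
  unfold wcls genElt; rw [map_mul, map_mul]

lemma wcls_sq (u : kˣ) : wcls k (u ^ 2) = 1 := by
  rw [← wcls_one, ← sub_eq_zero, wcls, wcls, ← map_sub, Ideal.Quotient.eq_zero_iff_mem]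
  exact Ideal.subset_span (Or.inr (Or.inl ⟨u, rfl⟩))

lemma wcls_mul_sq (a u : kˣ) : wcls k (a * u ^ 2) = wcls k a := by
  rw [wcls_mul, wcls_sq]; exact mul_one (wcls k a)

lemma wcls_eq_of_isSquare_mul {a b : kˣ} (h : IsSquare (a * b)) : wcls k a = wcls k b := by
  obtain ⟨r, hr⟩ := h
  calc wcls k a = wcls k (b⁻¹ * r ^ 2) := by rw [sq, ← hr, mul_comm a b, inv_mul_cancel_left]
    _ = wcls k (b⁻¹ * b ^ 2) := by rw [wcls_mul_sq, wcls_mul_sq]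
    _ = wcls k b := by congr 1; group

lemma wcls_add_wcls {a b c : kˣ} (h : (a : k) + b = c) :
    wcls k a + wcls k b = wcls k c + wcls k (a * b * c) := by
  rw [← sub_eq_zero, sub_add_eq_sub_sub, wcls, wcls, wcls, wcls, ← map_add, ← map_sub, ← map_sub,
    Ideal.Quotient.eq_zero_iff_mem]
  exact Ideal.subset_span (Or.inr (Or.inr ⟨a, b, c, h, rfl⟩))

lemma HasSqrtNegOne.isSquare_neg_one (hsq : HasSqrtNegOne k) : IsSquare (-1 : kˣ) := by
  obtain ⟨i, hi⟩ := hsq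
  have hi0 : i ≠ 0 := by rintro rfl; simp at hi
  exact ⟨Units.mk0 i hi0, Units.ext (by simp [hi])⟩

lemma WittRing.two_eq_zero (hsq : HasSqrtNegOne k) : (2 : WittRing k) = 0 := by
  have hneg : wcls k (-1) = 1 := by
    obtain ⟨r, hr⟩ := hsq.isSquare_neg_one
    rw [hr, ← sq, wcls_sq]
  have hhyp : wcls k 1 + wcls k (-1) = 0 := by
    rw [wcls, wcls, ← map_add, Ideal.Quotient.eq_zero_iff_mem]
    exact Ideal.subset_span (Set.mem_insert _ _)
  rw [wcls_one, hneg] at hhyp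
  linear_combination hhyp

end WittRing

def SquareClass (G : Type*) [CommGroup G] : Type _ := Additive (G ⧸ Subgroup.square G)

namespace SquareClass

variable {G : Type*} [CommGroup G]

instance : AddCommGroup (SquareClass G) :=
  inferInstanceAs (AddCommGroup (Additive (G ⧸ Subgroup.square G)))

def mk (a : G) : SquareClass G := Additive.ofMul (a : G ⧸ Subgroup.square G)

lemma mk_one : mk (1 : G) = 0 := rfl

lemma mk_mul (a b : G) : mk (a * b) = mk a + mk b := rfl

lemma mk_prod {ι : Type*} (s : Finset ι) (f : ι → G) : mk (∏ i ∈ s, f i) = ∑ i ∈ s, mk (f i) := by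
  classical
  induction s using Finset.induction_on with
  | empty => simp [mk_one]
  | insert i s hi ih => rw [Finset.prod_insert hi, Finset.sum_insert hi, mk_mul, ih]

lemma mk_eq_zero_iff {a : G} : mk a = 0 ↔ IsSquare a :=
  (QuotientGroup.eq_one_iff a).trans Subgroup.mem_square

lemma mk_surjective : Function.Surjective (mk : G → SquareClass G) :=
  QuotientGroup.mk_surjective

lemma two_nsmul_eq_zero (x : SquareClass G) : 2 • x = 0 := by
  obtain ⟨a, rfl⟩ := mk_surjective x
  rw [two_nsmul, ← mk_mul, mk_eq_zero_iff]
  exact ⟨a, rfl⟩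

instance : Module (ZMod 2) (SquareClass G) := AddCommGroup.zmodModule two_nsmul_eq_zero

instance : Module (ZMod 2)ᵐᵒᵖ (SquareClass G) :=
  Module.compHom _ (RingEquiv.toOpposite (ZMod 2)).symm.toRingHom

instance : IsCentralScalar (ZMod 2) (SquareClass G) := ⟨fun _ _ => rfl⟩

end SquareClass

section Invariant

open TrivSqZeroExt SquareClass

variable {k : Type*} [Field k]

def unitsToInvariant (k : Type*) [Field k] : kˣ →* TrivSqZeroExt (ZMod 2) (SquareClass kˣ) where
  toFun a := inl 1 + inr (mk a)
  map_one' := by ext <;> simp [mk_one]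
  map_mul' a b := by ext <;> simp [mk_mul, add_comm]

lemma unitsToInvariant_apply (a : kˣ) : unitsToInvariant k a = inl 1 + inr (mk a) := rfl

lemma wittRel_le_ker (hsq : HasSqrtNegOne k) :
    wittRel k ≤ RingHom.ker (MonoidAlgebra.lift ℤ _ kˣ (unitsToInvariant k)).toRingHom := by
  refine Ideal.span_le.2 ?_
  rintro _ (rfl | ⟨u, rfl⟩ | ⟨a, b, c, -, rfl⟩) <;>
    simp only [SetLike.mem_coe, RingHom.mem_ker, genElt, AlgHom.toRingHom_eq_coe,
      RingHom.coe_coe, map_add, map_sub, MonoidAlgebra.lift_of, unitsToInvariant_apply] <;>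
    ext <;> simp only [fst_add, fst_sub, fst_inl, fst_inr, snd_add, snd_sub, snd_inl, snd_inr,
      fst_zero, snd_zero, mk_one, zero_add, add_zero, sub_zero]
  · decide
  · exact mk_eq_zero_iff.2 (hsq.isSquare_neg_one)
  · exact sub_self 1
  · exact mk_eq_zero_iff.2 ⟨u, sq u⟩
  · decide
  · rw [mk_mul, mk_mul]
    calc mk a + mk b - mk c - (mk a + mk b + mk c) = -(2 • mk c) := by abel
      _ = 0 := by rw [SquareClass.two_nsmul_eq_zero, neg_zero]

/-- Dimension mod 2 and discriminant, as a ring homomorphism into `ℤ/2 ⊕ ε·(kˣ/kˣ²)` with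
`ε² = 0`; the discriminant needs no sign since `-1` is a square. -/
noncomputable def wittInvariant (hsq : HasSqrtNegOne k) :
    WittRing k →+* TrivSqZeroExt (ZMod 2) (SquareClass kˣ) :=
  Ideal.Quotient.lift (wittRel k) _ fun _ hx => wittRel_le_ker hsq hx

lemma wittInvariant_wcls (hsq : HasSqrtNegOne k) (a : kˣ) :
    wittInvariant hsq (wcls k a) = inl 1 + inr (mk a) := by
  simp [wittInvariant, wcls, genElt, unitsToInvariant_apply]

lemma wittInvariant_wclassOf (hsq : HasSqrtNegOne k) {n : ℕ} (q : Fin n → kˣ) :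
    wittInvariant hsq (wclassOf k q) = inl (n : ZMod 2) + inr (mk (∏ i, q i)) := by
  ext
  · simp [wclassOf, fst_sum, wittInvariant_wcls]
  · simp [wclassOf, snd_sum, wittInvariant_wcls, mk_prod]

lemma fst_wittInvariant_of_mem_fundIdeal (hsq : HasSqrtNegOne k) {x : WittRing k}
    (hx : x ∈ fundIdeal k) : (wittInvariant hsq x).fst = 0 := by
  induction hx using Submodule.span_induction with
  | mem x hx =>
    obtain ⟨a, b, rfl⟩ := hx
    simp [wittInvariant_wcls]
    decide
  | zero => simp
  | add x y _ _ hx hy => simp [hx, hy]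
  | smul r x _ hx => simp [hx]

lemma wittInvariant_eq_zero_of_mem_fundIdeal_sq (hsq : HasSqrtNegOne k) {x : WittRing k}
    (hx : x ∈ fundIdeal k ^ 2) : wittInvariant hsq x = 0 := by
  rw [Submodule.pow_succ, Submodule.pow_one] at hx
  refine (Ideal.mul_le.2 fun r hr s hs => ?_ :
    fundIdeal k * fundIdeal k ≤ RingHom.ker (wittInvariant hsq)) hx
  rw [RingHom.mem_ker, map_mul]
  ext <;> simp [fst_wittInvariant_of_mem_fundIdeal hsq hr, fst_wittInvariant_of_mem_fundIdeal hsq hs]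

lemma even_and_isSquare_prod_of_mem_fundIdeal_sq (hsq : HasSqrtNegOne k) {n : ℕ}
    {q : Fin n → kˣ} (hq : wclassOf k q ∈ fundIdeal k ^ 2) : Even n ∧ IsSquare (∏ i, q i) := by
  have h := wittInvariant_eq_zero_of_mem_fundIdeal_sq hsq hq
  rw [wittInvariant_wclassOf] at h
  exact ⟨ZMod.natCast_eq_zero_iff_even.1 (by simpa using congrArg fst h),
    mk_eq_zero_iff.1 (by simpa using congrArg snd h)⟩

lemma isSquare_prod_iff_of_wclassOf_eq (hsq : HasSqrtNegOne k) {m n : ℕ} {a : Fin m → kˣ}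
    {b : Fin n → kˣ} (h : wclassOf k a = wclassOf k b) :
    IsSquare (∏ i, a i) ↔ IsSquare (∏ i, b i) := by
  have h' := congrArg (fun x => (wittInvariant hsq x).snd) h
  simp only [wittInvariant_wclassOf, snd_add, snd_inl, snd_inr, zero_add] at h'
  rw [← mk_eq_zero_iff, ← mk_eq_zero_iff, h']

end Invariant

section Representation

variable {k : Type*} [Field k]

lemma wclassOf_cons {n : ℕ} (v : kˣ) (b : Fin n → kˣ) :
    wclassOf k (Fin.cons v b) = wcls k v + wclassOf k b := by
  simp [wclassOf, Fin.sum_univ_succ]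

lemma wclassOf_succ {n : ℕ} (a : Fin (n + 1) → kˣ) :
    wclassOf k a = wcls k (a 0) + wclassOf k (Fin.tail a) :=
  Fin.sum_univ_succ _

lemma wcls_eq_of_mul_sq_eq {a v : kˣ} {x : k} (h : a * x ^ 2 = v) : wcls k a = wcls k v := by
  have hx : x ≠ 0 := by rintro rfl; simp at h; exact v.ne_zero h.symm
  rw [← wcls_mul_sq a (Units.mk0 x hx)]
  congr 1; ext; simp [h]

lemma exists_wcls_add_wcls_eq {a b v : kˣ} {x y : k} (h : a * x ^ 2 + b * y ^ 2 = v) :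
    ∃ d : kˣ, wcls k a + wcls k b = wcls k v + wcls k d := by
  by_cases hx : x = 0
  · exact ⟨a, by rw [wcls_eq_of_mul_sq_eq (a := b) (x := y) (by simpa [hx] using h), add_comm]⟩
  by_cases hy : y = 0
  · exact ⟨b, by rw [wcls_eq_of_mul_sq_eq (x := x) (by simpa [hy] using h)]⟩
  refine ⟨a * Units.mk0 x hx ^ 2 * (b * Units.mk0 y hy ^ 2) * v, ?_⟩
  rw [← wcls_mul_sq a (Units.mk0 x hx), ← wcls_mul_sq b (Units.mk0 y hy)]
  exact wcls_add_wcls (by simpa using h)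

lemma exists_wclassOf_eq_cons {n : ℕ} (a : Fin (n + 1) → kˣ) (c : Fin (n + 1) → k) (v : kˣ)
    (h : ∑ i, (a i : k) * c i ^ 2 = v) :
    ∃ b : Fin n → kˣ, wclassOf k a = wclassOf k (Fin.cons v b) := by
  induction n generalizing v with
  | zero =>
    refine ⟨Fin.elim0, ?_⟩
    rw [wclassOf_succ, wclassOf_succ, Fin.cons_zero, wcls_eq_of_mul_sq_eq (by simpa using h)]
    rfl
  | succ n ih =>
    replace h : (a 0 : k) * c 0 ^ 2 + ∑ i, (Fin.tail a i : k) * Fin.tail c i ^ 2 = v := by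
      rwa [Fin.sum_univ_succ] at h
    set w := ∑ i, (Fin.tail a i : k) * Fin.tail c i ^ 2
    by_cases hw : w = 0
    · refine ⟨Fin.tail a, ?_⟩
      rw [wclassOf_succ, wclassOf_cons, wcls_eq_of_mul_sq_eq (x := c 0) (by simpa [hw] using h)]
    obtain ⟨b, hb⟩ := ih (Fin.tail a) (Fin.tail c) (Units.mk0 w hw) (Units.val_mk0 hw).symm
    obtain ⟨d, hd⟩ := exists_wcls_add_wcls_eq (a := a 0) (b := Units.mk0 w hw) (x := c 0) (y := 1)
      (by simpa using h)
    refine ⟨Fin.cons d b, ?_⟩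
    rw [wclassOf_succ, hb, wclassOf_cons, wclassOf_cons, wclassOf_cons, ← add_assoc, hd, add_assoc]

end Representation

section Decomposition

variable {k : Type*} [Field k]

lemma pf2In_zero : Pf2In k 0 0 :=
  ⟨Fin.elim0, fun i => i.elim0, by simp⟩

lemma Pf2In.add {x y : WittRing k} {r : ℕ} (hx : Pf2In k x r) (hy : IsPfister2W k y) :
    Pf2In k (x + y) (r + 1) := by
  obtain ⟨f, hf, rfl⟩ := hx
  exact ⟨Fin.snoc f y, Fin.lastCases (by simpa using hy) (fun i => by simpa using hf i),
    by simp [Fin.sum_univ_castSucc]⟩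

lemma pf2In_wclassOf_add_card_add_wcls_prod (hsq : HasSqrtNegOne k) {m : ℕ}
    (a : Fin (m + 1) → kˣ) : Pf2In k (wclassOf k a + m + wcls k (∏ i, a i)) m := by
  have h2 := WittRing.two_eq_zero hsq
  induction m with
  | zero =>
    convert pf2In_zero (k := k) using 1
    rw [wclassOf, Fin.sum_univ_one, Fin.prod_univ_one, Nat.cast_zero]
    linear_combination wcls k (a 0) * h2
  | succ m ih =>
    have hP : IsPfister2W k ((wcls k 1 + wcls k (∏ i, Fin.tail a i)) * (wcls k 1 + wcls k (a 0))) :=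
      ⟨_, _, rfl⟩
    have hprod : ∏ i, a i = a 0 * ∏ i, Fin.tail a i := Fin.prod_univ_succ a
    convert (ih (Fin.tail a)).add hP using 1
    rw [wclassOf_succ, hprod, wcls_mul, wcls_one]
    push_cast
    linear_combination (-wcls k (∏ i, Fin.tail a i)) * h2

lemma pf2In_wclassOf_add_card_of_isSquare_prod (hsq : HasSqrtNegOne k) {N : ℕ}
    (a : Fin N → kˣ) (ha : IsSquare (∏ i, a i)) : Pf2In k (wclassOf k a + N) (N - 2) := by
  have h2 := WittRing.two_eq_zero hsq
  rcases N with _ | _ | m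
  · simpa [wclassOf] using pf2In_zero
  · have ha0 : wcls k (a 0) = 1 := by
      rw [← wcls_one]; exact wcls_eq_of_isSquare_mul (by simpa using ha)
    convert pf2In_zero (k := k) using 1
    rw [wclassOf, Fin.sum_univ_one, ha0]
    push_cast
    linear_combination h2
  · show Pf2In k _ m
    have ha0 : wcls k (a 0) = wcls k (∏ i, Fin.tail a i) :=
      wcls_eq_of_isSquare_mul (by rwa [Fin.prod_univ_succ] at ha)
    convert pf2In_wclassOf_add_card_add_wcls_prod hsq (Fin.tail a) using 1
    rw [wclassOf_succ, ha0]
    push_cast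
    linear_combination h2

end Decomposition

theorem pf2_upper_bound_general (k : Type*) [Field k]
    (hsq : HasSqrtNegOne k) (n : ℕ) (q : Fin n → kˣ)
    (hq : wclassOf k q ∈ (fundIdeal k) ^ 2) :
    (∃ r ≤ n - 2, Pf2In k (wclassOf k q) r) ∧
    (RepresentsOne k q → ∃ r ≤ n - 3, Pf2In k (wclassOf k q) r) := by
  have h2 := WittRing.two_eq_zero hsq
  obtain ⟨hn, hdisc⟩ := even_and_isSquare_prod_of_mem_fundIdeal_sq hsq hq
  refine ⟨⟨n - 2, le_rfl, ?_⟩, fun ⟨c, hc⟩ => ⟨n - 3, le_rfl, ?_⟩⟩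
  · have h := pf2In_wclassOf_add_card_of_isSquare_prod hsq q hdisc
    rwa [natCast_eq_zero_of_even_of_two_eq_zero hn h2, add_zero] at h
  obtain _ | m := n
  · simp at hc
  obtain ⟨b, hb⟩ := exists_wclassOf_eq_cons q c 1 (by simpa using hc)
  have hm : Odd m := Nat.not_even_iff_odd.1 (Nat.even_add_one.1 hn)
  have hb_disc : IsSquare (∏ i, b i) := by
    simpa using (isSquare_prod_iff_of_wclassOf_eq hsq hb).1 hdisc
  rw [hb, wclassOf_cons, wcls_one, ← natCast_eq_one_of_odd_of_two_eq_zero hm h2, add_comm]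
  exact pf2In_wclassOf_add_card_of_isSquare_prod hsq b hb_disc

/-- A quadratic form of dimension n over k (char ≠ 2, √-1 ∈ k) whose Witt class lies in
I²(k) is a sum of at most n − 2 two-fold Pfister forms in W(k); at most n − 3 if it
represents 1. -/
theorem pf2_upper_bound (k : Type*) [Field k] (hchar : ringChar k ≠ 2)
    (hsq : HasSqrtNegOne k) (n : ℕ) (q : Fin n → kˣ)
    (hq : wclassOf k q ∈ (fundIdeal k) ^ 2) :
    (∃ r ≤ n - 2, Pf2In k (wclassOf k q) r) ∧
    (RepresentsOne k q → ∃ r ≤ n - 3, Pf2In k (wclassOf k q) r) :=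
  pf2_upper_bound_general k hsq n q hq
end
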